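/- arXiv:1908.06880 — 3 statements merged into one kernel-verified Lean document; each statement's English description precedes it below -/
import Mathlib

section
/- Let x_0 ≥ 1 and ℓ ≥ 1 be integers, κ > 0, and let e_1, e_2, … be independent random variables, each exponentially distributed with rate 1. Set c = max(x_0, ℓ). Then for every integer n ≥ 1 and every t ≥ 0, the probability that ∑_{i=1}^{n} e_i/(κ(x_0 + (i-1)ℓ)) ≤ t is at most (1 - e^{-cκt})^{n}. -/
/-!
By Rényi's representation, `∑_{i ≤ n} eᵢ / i` has the law of the maximum of `n` independent
standard exponentials, whose distribution function is `(1 - e^{-t})^n` on `t ≥ 0`. The inequality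
for this sum follows by induction on `n`, conditioning on the last summand: the step is the
integral `∫₀^{(n+1)t} e^{-y} (1 - e^{y/(n+1) - t})^n dy = (1 - e^{-t})^{n+1}`, whose integrand
rewrites as `e^{-y/(n+1)} (e^{-y/(n+1)} - e^{-t})^n` and so has an explicit antiderivative.
Replacing the rates `i` by rates `Aᵢ ≤ i μ` only enlarges the summands, and
`κ (x₀ + (i - 1) ℓ) ≤ i c κ`.
-/

open MeasureTheory ProbabilityTheory Real Set

lemma ae_nonneg_of_map_eq_expMeasure {Ω : Type*} [MeasurableSpace Ω] {P : Measure Ω}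
    {X : Ω → ℝ} (hX : AEMeasurable X P) {r : ℝ} (hlaw : P.map X = expMeasure r) :
    ∀ᵐ ω ∂P, 0 ≤ X ω := by
  refine ae_of_ae_map hX ?_
  rw [hlaw, ae_iff, show {y : ℝ | ¬ 0 ≤ y} = Iio 0 by ext; simp]
  exact (withDensity_apply _ measurableSet_Iio).trans (lintegral_exponentialPDF_of_nonpos le_rfl)

lemma ProbabilityTheory.IndepFun.measure_add_comp_le_eq_lintegral {Ω : Type*}
    [MeasurableSpace Ω] {P : Measure Ω} [IsFiniteMeasure P] {X Y : Ω → ℝ}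
    (hX : Measurable X) (hY : Measurable Y)
    (hXY : IndepFun X Y P) {g : ℝ → ℝ} (hg : Measurable g) (t : ℝ) :
    P {ω | X ω + g (Y ω) ≤ t} = ∫⁻ y, P {ω | X ω ≤ t - g y} ∂(P.map Y) := by
  have hS : MeasurableSet {p : ℝ × ℝ | p.2 + g p.1 ≤ t} :=
    measurableSet_le (by fun_prop) measurable_const
  have hmap : P.map (fun ω => (Y ω, X ω)) = (P.map Y).prod (P.map X) :=
    (indepFun_iff_map_prod_eq_prod_map_map hY.aemeasurable hX.aemeasurable).mp hXY.symm
  calc P {ω | X ω + g (Y ω) ≤ t}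
      = P.map (fun ω => (Y ω, X ω)) {p | p.2 + g p.1 ≤ t} := by
        rw [Measure.map_apply (hY.prodMk hX) hS]; rfl
    _ = ∫⁻ y, P {ω | X ω ≤ t - g y} ∂(P.map Y) := by
        rw [hmap, Measure.prod_apply hS]
        refine lintegral_congr fun y => ?_
        have hslice : Prod.mk y ⁻¹' {p : ℝ × ℝ | p.2 + g p.1 ≤ t} = Iic (t - g y) := by
          ext x; simp [le_sub_iff_add_le]
        rw [hslice, Measure.map_apply hX measurableSet_Iic]
        rfl

noncomputable def maxExpCDF (n : ℕ) (t : ℝ) : ℝ :=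
  (Ici 0).indicator (fun s => (1 - exp (-s)) ^ n) t

lemma measurable_maxExpCDF (n : ℕ) : Measurable (maxExpCDF n) :=
  Measurable.indicator (by fun_prop) measurableSet_Ici

lemma ofReal_maxExpCDF_le (n : ℕ) (s : ℝ) :
    ENNReal.ofReal (maxExpCDF n s) ≤ ENNReal.ofReal ((1 - exp (-s)) ^ n) := by
  rcases lt_or_ge s 0 with hs | hs
  · simp [maxExpCDF, hs.not_ge]
  · rw [maxExpCDF, indicator_of_mem (show s ∈ Ici 0 from hs)]

lemma integral_exp_neg_div_mul_sub_pow (n : ℕ) (t : ℝ) :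
    ∫ y in (0 : ℝ)..(n + 1) * t, exp (-(y / (n + 1))) * (exp (-(y / (n + 1))) - exp (-t)) ^ n
      = (1 - exp (-t)) ^ (n + 1) := by
  have hderiv : ∀ y : ℝ, HasDerivAt (fun y => -(exp (-(y / (n + 1))) - exp (-t)) ^ (n + 1))
      (exp (-(y / (n + 1))) * (exp (-(y / (n + 1))) - exp (-t)) ^ n) y := by
    intro y
    have hlin : HasDerivAt (fun y : ℝ => -(y / (n + 1))) (-(1 / (n + 1))) y :=
      ((hasDerivAt_id y).div_const _).neg
    refine ((hlin.exp.sub_const (exp (-t))).pow (n + 1)).neg.congr_deriv ?_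
    rw [Nat.add_sub_cancel]
    push_cast
    field_simp
  rw [intervalIntegral.integral_eq_sub_of_hasDerivAt (fun y _ => hderiv y)
    (by apply Continuous.intervalIntegrable; fun_prop)]
  field_simp
  simp

lemma exponentialPDF_one_mul_maxExpCDF (n : ℕ) (t y : ℝ) :
    exponentialPDF 1 y * ENNReal.ofReal (maxExpCDF n (t - y / (n + 1))) =
      ENNReal.ofReal ((Icc 0 ((n + 1) * t)).indicator
        (fun y => exp (-(y / (n + 1))) * (exp (-(y / (n + 1))) - exp (-t)) ^ n) y) := by
  have hm : (0 : ℝ) < n + 1 := by positivity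
  rcases lt_or_ge y 0 with hy | hy
  · rw [exponentialPDF_of_neg hy, zero_mul, indicator_of_notMem (fun h => hy.not_ge h.1),
      ENNReal.ofReal_zero]
  rw [exponentialPDF_of_nonneg hy, one_mul, one_mul]
  rcases le_or_gt y ((n + 1) * t) with hyt | hyt
  · have hs : 0 ≤ t - y / (n + 1) := by rw [sub_nonneg, div_le_iff₀ hm]; linarith
    rw [maxExpCDF, indicator_of_mem (mem_Ici.2 hs),
      indicator_of_mem (show y ∈ Icc 0 _ from ⟨hy, hyt⟩), ← ENNReal.ofReal_mul (exp_pos _).le]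
    congr 1
    have hsplit : exp (-y) = exp (-(y / (n + 1))) * exp (-(y / (n + 1))) ^ n := by
      rw [← exp_nat_mul, ← exp_add]; congr 1; field_simp; ring
    have hshift : exp (-(y / (n + 1))) * exp (-(t - y / (n + 1))) = exp (-t) := by
      rw [← exp_add]; ring_nf
    rw [hsplit, mul_assoc, ← mul_pow, mul_sub, mul_one, hshift]
  · have hs : t - y / (n + 1) < 0 := by rw [sub_neg, lt_div_iff₀ hm]; linarith
    rw [maxExpCDF, indicator_of_notMem (show t - y / (n + 1) ∉ Ici 0 from hs.not_ge),
      indicator_of_notMem (fun h => hyt.not_ge h.2), ENNReal.ofReal_zero, mul_zero]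

lemma lintegral_maxExpCDF_sub_div_expMeasure (n : ℕ) (t : ℝ) :
    ∫⁻ y, ENNReal.ofReal (maxExpCDF n (t - y / (n + 1))) ∂expMeasure 1
      = ENNReal.ofReal (maxExpCDF (n + 1) t) := by
  have hpdf : Measurable (exponentialPDF 1) := (measurable_exponentialPDFReal 1).ennreal_ofReal
  have hmeas : Measurable fun y : ℝ => ENNReal.ofReal (maxExpCDF n (t - y / (n + 1))) :=
    ((measurable_maxExpCDF n).comp (by fun_prop)).ennreal_ofReal
  rw [show expMeasure 1 = volume.withDensity (exponentialPDF 1) from rfl,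
    lintegral_withDensity_eq_lintegral_mul _ hpdf hmeas]
  simp only [Pi.mul_apply, exponentialPDF_one_mul_maxExpCDF]
  rcases lt_or_ge t 0 with ht | ht
  · have hm : (n + 1 : ℝ) * t < 0 := mul_neg_of_pos_of_neg (by positivity) ht
    rw [Icc_eq_empty hm.not_ge, maxExpCDF, indicator_of_notMem (show t ∉ Ici 0 from ht.not_ge)]
    simp
  have hint : Integrable ((Icc 0 ((n + 1) * t)).indicator
      (fun y => exp (-(y / (n + 1))) * (exp (-(y / (n + 1))) - exp (-t)) ^ n)) :=
    (Continuous.integrableOn_Icc (by fun_prop)).integrable_indicator measurableSet_Icc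
  have hnonneg : ∀ y, 0 ≤ (Icc 0 ((n + 1) * t)).indicator
      (fun y => exp (-(y / (n + 1))) * (exp (-(y / (n + 1))) - exp (-t)) ^ n) y := by
    refine indicator_nonneg fun y hy => mul_nonneg (exp_pos _).le (pow_nonneg ?_ n)
    rw [sub_nonneg, exp_le_exp, neg_le_neg_iff, div_le_iff₀ (by positivity)]
    linarith [hy.2]
  rw [← ofReal_integral_eq_lintegral_ofReal hint (ae_of_all _ hnonneg),
    integral_indicator measurableSet_Icc, integral_Icc_eq_integral_Ioc,
    ← intervalIntegral.integral_of_le (by positivity), integral_exp_neg_div_mul_sub_pow,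
    maxExpCDF, indicator_of_mem (show t ∈ Ici 0 from ht)]

section ExponentialSums

variable {Ω : Type*} [MeasurableSpace Ω] {P : Measure Ω} [IsProbabilityMeasure P]
  {e : ℕ → Ω → ℝ} (he_meas : ∀ i, Measurable (e i)) (he_indep : iIndepFun e P)
  (he_law : ∀ i, P.map (e i) = expMeasure 1)
include he_meas he_indep he_law

theorem measure_sum_div_nat_le_le_maxExpCDF (n : ℕ) (t : ℝ) :
    P {ω | ∑ i ∈ Finset.Icc 1 n, e i ω / i ≤ t} ≤ ENNReal.ofReal (maxExpCDF n t) := by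
  induction n generalizing t with
  | zero =>
    rcases lt_or_ge t 0 with ht | ht
    · simp [ht.not_ge]
    · simp [maxExpCDF, ht]
  | succ n ih =>
    set T : Ω → ℝ := fun ω => ∑ i ∈ Finset.Icc 1 n, e i ω / i
    have hT : Measurable T := Finset.measurable_sum _ fun i _ => (he_meas i).div_const _
    have hindep : IndepFun T (e (n + 1)) P := by
      have hφ : Measurable fun x : Finset.Icc 1 n → ℝ => ∑ i, x i / (i : ℕ) := by fun_prop
      have hψ : Measurable fun x : ({n + 1} : Finset ℕ) → ℝ =>
          x ⟨n + 1, Finset.mem_singleton_self _⟩ := measurable_pi_apply _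
      have := (he_indep.indepFun_finset (Finset.Icc 1 n) {n + 1} (by simp) he_meas).comp hφ hψ
      convert this using 1
      · funext ω
        exact (Finset.sum_coe_sort (Finset.Icc 1 n) fun i => e i ω / i).symm
      · rfl
    have hsplit : {ω | ∑ i ∈ Finset.Icc 1 (n + 1), e i ω / i ≤ t}
        = {ω | T ω + e (n + 1) ω / (n + 1) ≤ t} := by
      ext ω
      simp [T, Finset.sum_Icc_succ_top (Nat.le_add_left 1 n)]
    calc P {ω | ∑ i ∈ Finset.Icc 1 (n + 1), e i ω / i ≤ t}
        = ∫⁻ y, P {ω | T ω ≤ t - y / (n + 1)} ∂expMeasure 1 := by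
          rw [hsplit, ← he_law (n + 1)]
          exact hindep.measure_add_comp_le_eq_lintegral hT (he_meas _)
            (g := fun y => y / (n + 1)) (by fun_prop) t
      _ ≤ ∫⁻ y, ENNReal.ofReal (maxExpCDF n (t - y / (n + 1))) ∂expMeasure 1 :=
          lintegral_mono fun y => ih _
      _ = ENNReal.ofReal (maxExpCDF (n + 1) t) := by
          rw [lintegral_maxExpCDF_sub_div_expMeasure]

theorem measure_sum_div_le_le_maxExpCDF {n : ℕ} {A : ℕ → ℝ} {μ : ℝ} (hμ : 0 ≤ μ)
    (hA_pos : ∀ i ∈ Finset.Icc 1 n, 0 < A i) (hA_le : ∀ i ∈ Finset.Icc 1 n, A i ≤ i * μ)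
    (t : ℝ) :
    P {ω | ∑ i ∈ Finset.Icc 1 n, e i ω / A i ≤ t} ≤ ENNReal.ofReal (maxExpCDF n (μ * t)) := by
  refine (measure_mono_ae ?_).trans
    (measure_sum_div_nat_le_le_maxExpCDF he_meas he_indep he_law n (μ * t))
  have hnonneg : ∀ᵐ ω ∂P, ∀ i, 0 ≤ e i ω := ae_all_iff.2 fun i =>
    ae_nonneg_of_map_eq_expMeasure (he_meas i).aemeasurable (he_law i)
  filter_upwards [hnonneg] with ω hω (hle : ∑ i ∈ Finset.Icc 1 n, e i ω / A i ≤ t)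
  have hterm : ∀ i ∈ Finset.Icc 1 n, e i ω / i ≤ μ * (e i ω / A i) := fun i hi => by
    have hi_pos : (0 : ℝ) < i := by exact_mod_cast (Finset.mem_Icc.1 hi).1
    calc e i ω / i = e i ω / A i * (A i / i) := by field_simp [(hA_pos i hi).ne']
      _ ≤ e i ω / A i * μ := mul_le_mul_of_nonneg_left
          ((div_le_iff₀ hi_pos).2 (by linarith [hA_le i hi])) (div_nonneg (hω i) (hA_pos i hi).le)
      _ = μ * (e i ω / A i) := mul_comm _ _
  calc ∑ i ∈ Finset.Icc 1 n, e i ω / i ≤ ∑ i ∈ Finset.Icc 1 n, μ * (e i ω / A i) :=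
        Finset.sum_le_sum hterm
    _ = μ * ∑ i ∈ Finset.Icc 1 n, e i ω / A i := (Finset.mul_sum _ _ _).symm
    _ ≤ μ * t := mul_le_mul_of_nonneg_left hle hμ

end ExponentialSums

theorem stmt3_general {Ω : Type*} [MeasurableSpace Ω] (P : Measure Ω) [IsProbabilityMeasure P]
    (x₀ ℓ : ℕ) (hx₀ : 1 ≤ x₀) (κ : ℝ) (hκ : 0 < κ)
    (e : ℕ → Ω → ℝ) (he_meas : ∀ i, Measurable (e i))
    (he_indep : iIndepFun e P)
    (he_law : ∀ i, P.map (e i) = expMeasure 1)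
    (c : ℕ) (hc : c = max x₀ ℓ)
    (n : ℕ) (t : ℝ) :
    P {ω | ∑ i ∈ Finset.Icc 1 n, e i ω / (κ * (x₀ + (i - 1) * ℓ)) ≤ t}
      ≤ ENNReal.ofReal ((1 - Real.exp (-(c : ℝ) * κ * t)) ^ n) := by
  have hx₀c : (x₀ : ℝ) ≤ c := by exact_mod_cast hc ▸ le_max_left x₀ ℓ
  have hℓc : (ℓ : ℝ) ≤ c := by exact_mod_cast hc ▸ le_max_right x₀ ℓ
  have hx₀_pos : (0 : ℝ) < x₀ := by exact_mod_cast hx₀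
  have hi_one : ∀ i ∈ Finset.Icc 1 n, (0 : ℝ) ≤ i - 1 := fun i hi => by
    simpa using (Nat.one_le_cast.2 (Finset.mem_Icc.1 hi).1 : (1 : ℝ) ≤ i)
  have hA_pos : ∀ i ∈ Finset.Icc 1 n, 0 < κ * (x₀ + (i - 1 : ℝ) * ℓ) := fun i hi =>
    mul_pos hκ (by nlinarith [hi_one i hi, (Nat.cast_nonneg ℓ : (0 : ℝ) ≤ ℓ)])
  have hA_le : ∀ i ∈ Finset.Icc 1 n, κ * (x₀ + (i - 1 : ℝ) * ℓ) ≤ i * (c * κ) := fun i hi => by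
    nlinarith [hi_one i hi, mul_le_mul_of_nonneg_left hℓc (hi_one i hi)]
  calc P {ω | ∑ i ∈ Finset.Icc 1 n, e i ω / (κ * (x₀ + (i - 1) * ℓ)) ≤ t}
      ≤ ENNReal.ofReal (maxExpCDF n (c * κ * t)) :=
        measure_sum_div_le_le_maxExpCDF he_meas he_indep he_law (by positivity) hA_pos hA_le t
    _ ≤ ENNReal.ofReal ((1 - Real.exp (-(c : ℝ) * κ * t)) ^ n) := by
        simpa only [neg_mul] using ofReal_maxExpCDF_le n (c * κ * t)

/-- For integers `x₀, ℓ ≥ 1`, `κ > 0`, and independent rate-1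
exponential random variables `e 1, e 2, …`, with `c = max x₀ ℓ`, for every
`n ≥ 1` and `t ≥ 0`,
`P(∑_{i=1}^n e i / (κ (x₀ + (i-1) ℓ)) ≤ t) ≤ (1 - e^{-cκt})^n`. -/
theorem stmt3 {Ω : Type*} [MeasurableSpace Ω] (P : Measure Ω) [IsProbabilityMeasure P]
    (x₀ ℓ : ℕ) (hx₀ : 1 ≤ x₀) (hℓ : 1 ≤ ℓ) (κ : ℝ) (hκ : 0 < κ)
    (e : ℕ → Ω → ℝ) (he_meas : ∀ i, Measurable (e i))
    (he_indep : iIndepFun e P)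
    (he_law : ∀ i, P.map (e i) = expMeasure 1)
    (c : ℕ) (hc : c = max x₀ ℓ)
    (n : ℕ) (hn : 1 ≤ n) (t : ℝ) (ht : 0 ≤ t) :
    P {ω | ∑ i ∈ Finset.Icc 1 n, e i ω / (κ * (x₀ + (i - 1) * ℓ)) ≤ t}
      ≤ ENNReal.ofReal ((1 - Real.exp (-(c : ℝ) * κ * t)) ^ n) :=
  stmt3_general P x₀ ℓ hx₀ κ hκ e he_meas he_indep he_law c hc n t
end

section
/- Let x_0 ≥ 1 and ℓ ≥ 1 be integers, κ > 0, t ≥ 0, and let e_1, e_2, … be independent random variables, each exponentially distributed with rate 1. Set c = max(x_0, ℓ), δ = (1 - e^{-cκt})^{1/ℓ}, and C = (1 - e^{-cκt})^{-1 - x_0/ℓ}. Then for every integer M ≥ ℓ + x_0, writing n = ⌊(M - x_0)/ℓ⌋, the probability that ∑_{i=1}^{n} e_i/(κ(x_0 + (i-1)ℓ)) ≤ t is at most C·δ^M, where 0 ≤ δ < 1. -/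
open MeasureTheory ProbabilityTheory Real

/-- Auxiliary bound function: the CDF bound `(1 - e^{-s})^n` for `s ≥ 0`, `0` otherwise. -/
noncomputable def stmt4Bn (n : ℕ) (s : ℝ) : ENNReal :=
  if 0 ≤ s then ENNReal.ofReal ((1 - Real.exp (-s))^n) else 0

lemma stmt4Bn_measurable (n : ℕ) : Measurable (stmt4Bn n) := by
  unfold stmt4Bn
  exact Measurable.ite measurableSet_Ici (by fun_prop) measurable_const

lemma stmt4_ftc (n : ℕ) (s : ℝ) :
    ∫ y in (0:ℝ)..((n+1)*s), (1 - Real.exp (y/(n+1) - s))^n * Real.exp (-y)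
      = (1 - Real.exp (-s))^(n+1) := by
  have hd : ∀ x ∈ Set.uIcc (0:ℝ) ((n+1)*s),
      HasDerivAt (fun x => -(Real.exp (-x) * (1 - Real.exp (x/(n+1) - s))^(n+1)))
        ((1 - Real.exp (x/(n+1) - s))^n * Real.exp (-x)) x := by
    intro x _
    have h1 : HasDerivAt (fun x : ℝ => Real.exp (x/(n+1) - s))
        (Real.exp (x/(n+1) - s) * (1/(n+1))) x := by
      have : HasDerivAt (fun x : ℝ => x/(n+1) - s) (1/(n+1)) x :=
        ((hasDerivAt_id x).div_const _).sub_const s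
      simpa [Function.comp_def] using (Real.hasDerivAt_exp (x/(n+1) - s)).comp x this
    have h2 : HasDerivAt (fun x : ℝ => (1 - Real.exp (x/(n+1) - s))^(n+1))
        ((n+1) * (1 - Real.exp (x/(n+1) - s))^n * (-(Real.exp (x/(n+1) - s) * (1/(n+1))))) x := by
      have := ((h1.const_sub 1).fun_pow (n+1))
      simpa using this
    have h3 : HasDerivAt (fun x : ℝ => Real.exp (-x)) (-Real.exp (-x)) x := by
      simpa [Function.comp_def] using (Real.hasDerivAt_exp (-x)).comp x (hasDerivAt_neg x)
    have h4 := (h3.fun_mul h2).fun_neg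
    refine h4.congr_deriv ?_
    have hne : ((n:ℝ)+1) ≠ 0 := by positivity
    field_simp
    ring
  have hint : IntervalIntegrable
      (fun x => (1 - Real.exp (x/(n+1) - s))^n * Real.exp (-x)) volume 0 ((n+1)*s) := by
    apply Continuous.intervalIntegrable
    continuity
  have := intervalIntegral.integral_eq_sub_of_hasDerivAt hd hint
  rw [this]
  have h0 : ((n:ℝ)+1)*s/(n+1) - s = 0 := by
    have hne : ((n:ℝ)+1) ≠ 0 := by positivity
    field_simp
    ring
  rw [h0]
  simp

lemma stmt4_exponent_le (x₀ ℓ M n : ℕ) (hℓpos : (0:ℝ) < (ℓ:ℝ))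
    (h : (M:ℝ) - (x₀:ℝ) ≤ (ℓ:ℝ) * ((n:ℝ) + 1)) :
    -1 - (x₀:ℝ)/ℓ + ((1:ℝ)/ℓ) * M ≤ (n:ℝ) := by
  have hℓne : (ℓ:ℝ) ≠ 0 := ne_of_gt hℓpos
  rw [← sub_nonneg]
  have key : (n:ℝ) - (-1 - (x₀:ℝ)/ℓ + ((1:ℝ)/ℓ) * M)
      = ((ℓ:ℝ) * ((n:ℝ) + 1) - ((M:ℝ) - (x₀:ℝ))) / ℓ := by
    field_simp
    ring
  rw [key]
  exact div_nonneg (by linarith) hℓpos.le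

lemma stmt4_expMeasure_Iio : expMeasure 1 (Set.Iio 0) = 0 := by
  have h : expMeasure 1 = volume.withDensity (exponentialPDF 1) := rfl
  rw [h, withDensity_apply _ measurableSet_Iio]
  exact lintegral_exponentialPDF_of_nonpos le_rfl

/-- The key integral computation: integrating the bound against an exponential density. -/
lemma stmt4_key_integral (n : ℕ) (s : ℝ) :
    ∫⁻ y, stmt4Bn n (s - y/(n+1)) ∂(expMeasure 1) ≤ stmt4Bn (n+1) s := by
  have hmeas : Measurable (fun y : ℝ => stmt4Bn n (s - y/(n+1))) :=
    (stmt4Bn_measurable n).comp (by fun_prop)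
  have hpdf : Measurable (exponentialPDF 1) :=
    (measurable_exponentialPDFReal 1).ennreal_ofReal
  have hrw : expMeasure 1 = volume.withDensity (exponentialPDF 1) := rfl
  rw [hrw, lintegral_withDensity_eq_lintegral_mul _ hpdf hmeas]
  by_cases hs : 0 ≤ s
  · -- main case
    set T : ℝ := ((n:ℝ)+1)*s with hT
    have hT0 : 0 ≤ T := by positivity
    have hnp : (0:ℝ) < (n:ℝ)+1 := by positivity
    set f : ℝ → ℝ := fun y => (1 - Real.exp (y/(n+1) - s))^n * Real.exp (-y) with hf
    have hae : (fun y => (exponentialPDF 1 * fun y => stmt4Bn n (s - y/(n+1))) y)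
        =ᵐ[volume] (Set.Ioc 0 T).indicator (fun y => ENNReal.ofReal (f y)) := by
      have hsub : {y : ℝ | (fun y => (exponentialPDF 1 * fun y => stmt4Bn n (s - y/(n+1))) y) y
          ≠ (Set.Ioc 0 T).indicator (fun y => ENNReal.ofReal (f y)) y} ⊆ {0} := by
        intro y hy
        simp only [Set.mem_setOf_eq, Pi.mul_apply] at hy
        by_contra hy0
        apply hy
        rcases lt_trichotomy y 0 with h | h | h
        · rw [exponentialPDF_of_neg h, zero_mul,
            Set.indicator_of_notMem (by simp [Set.mem_Ioc]; intro h'; exact absurd h' h.not_gt)]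
        · exact absurd h (by simpa using hy0)
        · rw [exponentialPDF_of_nonneg h.le]
          by_cases hyT : y ≤ T
          · have hys : 0 ≤ s - y/(n+1) := by
              rw [sub_nonneg, div_le_iff₀ hnp]
              linarith [hyT, hT]
            rw [Set.indicator_of_mem (Set.mem_Ioc.mpr ⟨h, hyT⟩), stmt4Bn, if_pos hys]
            rw [← ENNReal.ofReal_mul (by positivity)]
            congr 1
            rw [hf]
            have : -(s - y/(n+1)) = y/(n+1) - s := by ring
            rw [this]
            ring_nf
          · have hys : s - y/(n+1) < 0 := by
              rw [sub_neg, lt_div_iff₀ hnp]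
              push_neg at hyT
              linarith [hyT, hT]
            rw [stmt4Bn, if_neg (not_le.mpr hys), mul_zero,
              Set.indicator_of_notMem (by simp [Set.mem_Ioc]; intro _; linarith [not_le.mp hyT])]
      have : volume {y : ℝ | (fun y => (exponentialPDF 1 * fun y => stmt4Bn n (s - y/(n+1))) y) y
          ≠ (Set.Ioc 0 T).indicator (fun y => ENNReal.ofReal (f y)) y} = 0 :=
        measure_mono_null hsub (by simp)
      exact this
    rw [lintegral_congr_ae hae, lintegral_indicator measurableSet_Ioc]
    have hfc : Continuous f := by rw [hf]; continuity
    have hint : IntegrableOn f (Set.Ioc 0 T) volume := hfc.integrableOn_Ioc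
    have hnn : 0 ≤ᵐ[volume.restrict (Set.Ioc 0 T)] f := by
      refine Filter.Eventually.mono ((ae_restrict_iff' measurableSet_Ioc).mpr ?_) (fun y h => h)
      filter_upwards with y hy
      have : y/(n+1) - s ≤ 0 := by
        rw [sub_nonpos, div_le_iff₀ hnp]
        linarith [hy.2, hT]
      have h1 : Real.exp (y/(n+1) - s) ≤ 1 := Real.exp_le_one_iff.mpr this
      have h2 : (0:ℝ) ≤ (1 - Real.exp (y/(n+1) - s))^n := pow_nonneg (by linarith) n
      exact mul_nonneg h2 (Real.exp_nonneg (-y))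
    rw [← ofReal_integral_eq_lintegral_ofReal hint hnn]
    have : ∫ y in Set.Ioc 0 T, f y = ∫ y in (0:ℝ)..T, f y :=
      (intervalIntegral.integral_of_le hT0).symm
    rw [this, hT, hf, stmt4_ftc n s, stmt4Bn, if_pos hs]
  · -- s < 0 : integrand vanishes
    push_neg at hs
    have : ∀ y : ℝ, (exponentialPDF 1 * fun y => stmt4Bn n (s - y/(n+1))) y = 0 := by
      intro y
      simp only [Pi.mul_apply]
      rcases lt_or_ge y 0 with h | h
      · rw [exponentialPDF_of_neg h, zero_mul]
      · have : s - y/(n+1) < 0 := by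
          have : 0 ≤ y/(n+1) := by positivity
          linarith
        rw [stmt4Bn, if_neg (not_le.mpr this), mul_zero]
    rw [lintegral_congr this]
    simp [stmt4Bn, if_neg (not_le.mpr hs)]

/-- The Yule first-passage bound: `P(∑_{i=1}^n e_i / i ≤ s) ≤ (1-e^{-s})^n`. -/
lemma stmt4_yule {Ω : Type*} [MeasurableSpace Ω] (P : Measure Ω) [IsProbabilityMeasure P]
    (e : ℕ → Ω → ℝ) (he_meas : ∀ i, Measurable (e i))
    (he_indep : iIndepFun e P)
    (he_law : ∀ i, P.map (e i) = expMeasure 1) :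
    ∀ (n : ℕ) (s : ℝ),
      P {ω | ∑ i ∈ Finset.Icc 1 n, e i ω / i ≤ s} ≤ stmt4Bn n s := by
  intro n
  induction n with
  | zero =>
    intro s
    by_cases hs : 0 ≤ s
    · rw [stmt4Bn, if_pos hs]
      simp only [pow_zero, ENNReal.ofReal_one]
      exact prob_le_one
    · rw [stmt4Bn, if_neg hs]
      have hset : {ω : Ω | ∑ i ∈ Finset.Icc 1 0, e i ω / i ≤ s} = ∅ := by
        ext ω
        have hempty : (Finset.Icc 1 0 : Finset ℕ) = ∅ := by simp
        simp only [hempty, Finset.sum_empty, Set.mem_setOf_eq, Set.mem_empty_iff_false,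
          iff_false, not_le]
        linarith [not_le.mp hs]
      rw [hset]
      simp
  | succ n ih =>
    intro s
    -- scaled variables
    set e' : ℕ → Ω → ℝ := fun i ω => e i ω / i with he'
    have he'_meas : ∀ i, Measurable (e' i) := fun i => (he_meas i).div_const _
    have he'_indep : iIndepFun e' P :=
      he_indep.comp (fun i x => x / i) (fun i => measurable_id.div_const _)
    set A : Ω → ℝ := fun ω => ∑ j ∈ Finset.Icc 1 n, e' j ω with hA
    set X : Ω → ℝ := e' (n+1) with hX
    have hA_meas : Measurable A := Finset.measurable_sum _ (fun i _ => he'_meas i)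
    have hX_meas : Measurable X := he'_meas (n+1)
    have hAX : IndepFun X A P := by
      have h := he'_indep.indepFun_finsetSum_of_notMem he'_meas
        (s := Finset.Icc 1 n) (i := n+1) (by simp)
      have hsum : (∑ j ∈ Finset.Icc 1 n, e' j) = A := by
        funext ω; simp [hA, Finset.sum_apply]
      rw [hsum] at h
      exact h.symm
    -- rewrite the event
    have hev : {ω : Ω | ∑ i ∈ Finset.Icc 1 (n+1), e i ω / i ≤ s}
        = {ω : Ω | A ω + X ω ≤ s} := by
      ext ω
      simp only [Set.mem_setOf_eq]
      rw [Finset.sum_Icc_succ_top (by omega : 1 ≤ n+1)]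
    rw [hev]
    -- product measure
    have hE : MeasurableSet {p : ℝ × ℝ | p.2 + p.1 ≤ s} :=
      measurableSet_le (measurable_snd.add measurable_fst) measurable_const
    have h1 : P {ω : Ω | A ω + X ω ≤ s}
        = P.map (fun ω => (X ω, A ω)) {p : ℝ × ℝ | p.2 + p.1 ≤ s} := by
      rw [Measure.map_apply (hX_meas.prodMk hA_meas) hE]
      rfl
    have h2 : P.map (fun ω => (X ω, A ω)) = (P.map X).prod (P.map A) :=
      (indepFun_iff_map_prod_eq_prod_map_map hX_meas.aemeasurable
        hA_meas.aemeasurable).mp hAX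
    haveI : IsProbabilityMeasure (P.map A) := Measure.isProbabilityMeasure_map hA_meas.aemeasurable
    haveI : IsProbabilityMeasure (P.map X) := Measure.isProbabilityMeasure_map hX_meas.aemeasurable
    rw [h1, h2, Measure.prod_apply hE]
    -- bound the slice
    have hbound : ∀ x : ℝ, (P.map A) (Prod.mk x ⁻¹' {p : ℝ × ℝ | p.2 + p.1 ≤ s})
        ≤ stmt4Bn n (s - x) := by
      intro x
      have hpre : Prod.mk x ⁻¹' {p : ℝ × ℝ | p.2 + p.1 ≤ s} = Set.Iic (s - x) := by
        ext a
        simp only [Set.mem_preimage, Set.mem_setOf_eq, Set.mem_Iic]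
        constructor <;> intro h <;> linarith
      rw [hpre, Measure.map_apply hA_meas measurableSet_Iic]
      have : A ⁻¹' Set.Iic (s - x) = {ω : Ω | ∑ i ∈ Finset.Icc 1 n, e i ω / i ≤ s - x} := by
        ext ω
        simp [hA, he', Set.mem_Iic]
      rw [this]
      exact ih (s - x)
    calc ∫⁻ x, (P.map A) (Prod.mk x ⁻¹' {p : ℝ × ℝ | p.2 + p.1 ≤ s}) ∂(P.map X)
        ≤ ∫⁻ x, stmt4Bn n (s - x) ∂(P.map X) := lintegral_mono hbound
      _ = ∫⁻ ω, stmt4Bn n (s - X ω) ∂P := by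
          rw [lintegral_map (show Measurable fun x : ℝ => stmt4Bn n (s - x) from
            (stmt4Bn_measurable n).comp (by fun_prop)) hX_meas]
      _ = ∫⁻ y, stmt4Bn n (s - y/(n+1)) ∂(P.map (e (n+1))) := by
          rw [lintegral_map (show Measurable fun y : ℝ => stmt4Bn n (s - y/(n+1)) from
            (stmt4Bn_measurable n).comp (by fun_prop)) (he_meas (n+1))]
          refine lintegral_congr fun a => ?_
          have : X a = e (n+1) a / ((n:ℝ)+1) := by
            simp only [hX, he']
            push_cast
            ring
          rw [this]
      _ = ∫⁻ y, stmt4Bn n (s - y/(n+1)) ∂(expMeasure 1) := by rw [he_law (n+1)]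
      _ ≤ stmt4Bn (n+1) s := stmt4_key_integral n s

/-- For integers `x₀, ℓ ≥ 1`, `κ > 0`, `t ≥ 0`, independent rate-1
exponentials `e i`, with `c = max x₀ ℓ`, `δ = (1-e^{-cκt})^{1/ℓ}` and
`C = (1-e^{-cκt})^{-1-x₀/ℓ}`: for every `M ≥ ℓ + x₀`, with `n = ⌊(M-x₀)/ℓ⌋`,
`P(∑_{i=1}^n e i / (κ(x₀+(i-1)ℓ)) ≤ t) ≤ C δ^M`, and `0 ≤ δ < 1`. -/
theorem stmt4 {Ω : Type*} [MeasurableSpace Ω] (P : Measure Ω) [IsProbabilityMeasure P]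
    (x₀ ℓ : ℕ) (hx₀ : 1 ≤ x₀) (hℓ : 1 ≤ ℓ) (κ t : ℝ) (hκ : 0 < κ) (ht : 0 ≤ t)
    (e : ℕ → Ω → ℝ) (he_meas : ∀ i, Measurable (e i))
    (he_indep : iIndepFun e P)
    (he_law : ∀ i, P.map (e i) = expMeasure 1)
    (c : ℕ) (hc : c = max x₀ ℓ)
    (δ C : ℝ)
    (hδ : δ = (1 - Real.exp (-(c : ℝ) * κ * t)) ^ ((1 : ℝ) / (ℓ : ℝ)))
    (hC : C = (1 - Real.exp (-(c : ℝ) * κ * t)) ^ (-1 - (x₀ : ℝ) / (ℓ : ℝ)))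
    (M : ℕ) (hM : ℓ + x₀ ≤ M) (n : ℕ) (hn : n = (M - x₀) / ℓ) :
    0 ≤ δ ∧ δ < 1 ∧
      P {ω | ∑ i ∈ Finset.Icc 1 n, e i ω / (κ * (x₀ + (i - 1) * ℓ)) ≤ t}
        ≤ ENNReal.ofReal (C * δ ^ M) := by
  have hcx : x₀ ≤ c := hc ▸ le_max_left _ _
  have hcℓ : ℓ ≤ c := hc ▸ le_max_right _ _
  have hc1 : 1 ≤ c := le_trans hx₀ hcx
  have hcR : (1:ℝ) ≤ (c:ℝ) := by exact_mod_cast hc1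
  have hℓR : (1:ℝ) ≤ (ℓ:ℝ) := by exact_mod_cast hℓ
  have hℓpos : (0:ℝ) < (ℓ:ℝ) := by linarith
  set β : ℝ := 1 - Real.exp (-(c : ℝ) * κ * t) with hβ
  have harg : -(c : ℝ) * κ * t ≤ 0 := by
    have : (0:ℝ) ≤ (c:ℝ) * κ * t := by positivity
    nlinarith
  have hβ0 : 0 ≤ β := by
    have := Real.exp_le_one_iff.mpr harg
    simp only [hβ]; linarith
  have hβ1 : β < 1 := by
    have := Real.exp_pos (-(c : ℝ) * κ * t)
    simp only [hβ]; linarith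
  have hδ0 : 0 ≤ δ := hδ ▸ Real.rpow_nonneg hβ0 _
  have hδ1 : δ < 1 := hδ ▸ Real.rpow_lt_one hβ0 hβ1 (by positivity)
  refine ⟨hδ0, hδ1, ?_⟩
  -- n ≥ 1
  have hn1 : 1 ≤ n := by
    rw [hn]
    exact (Nat.one_le_div_iff (by omega)).mpr (by omega)
  -- event inclusion
  set E' : Set Ω := {ω | ∑ i ∈ Finset.Icc 1 n, e i ω / i ≤ κ * c * t} with hE'
  set N : Set Ω := ⋃ i ∈ (Finset.Icc 1 n : Finset ℕ), {ω | e i ω < 0} with hN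
  have hsub : {ω : Ω | ∑ i ∈ Finset.Icc 1 n, e i ω / (κ * (x₀ + (i - 1) * ℓ)) ≤ t}
      ⊆ E' ∪ N := by
    intro ω hω
    simp only [Set.mem_setOf_eq] at hω
    by_cases hneg : ∃ i ∈ Finset.Icc 1 n, e i ω < 0
    · right
      obtain ⟨i, hi, hlt⟩ := hneg
      exact Set.mem_biUnion hi hlt
    · left
      push_neg at hneg
      simp only [hE', Set.mem_setOf_eq]
      have hκc : (0:ℝ) < κ * c := by positivity
      have hterm : ∀ i ∈ Finset.Icc 1 n,
          (e i ω / i) / (κ * c) ≤ e i ω / (κ * ((x₀:ℝ) + ((i:ℝ) - 1) * ℓ)) := by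
        intro i hi
        have hi1 : 1 ≤ i := (Finset.mem_Icc.mp hi).1
        have hiR : (1:ℝ) ≤ (i:ℝ) := by exact_mod_cast hi1
        have hcxR : (x₀:ℝ) ≤ c := by exact_mod_cast hcx
        have hcℓR : (ℓ:ℝ) ≤ c := by exact_mod_cast hcℓ
        have hx₀R : (1:ℝ) ≤ (x₀:ℝ) := by exact_mod_cast hx₀
        have hnn1 : (0:ℝ) ≤ ((i:ℝ) - 1) * ℓ :=
          mul_nonneg (by linarith) (by linarith)
        have hbase : (0:ℝ) < (x₀:ℝ) + ((i:ℝ) - 1) * ℓ := by linarith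
        have hpos : (0:ℝ) < κ * ((x₀:ℝ) + ((i:ℝ) - 1) * ℓ) := mul_pos hκ hbase
        have h2' : ((i:ℝ) - 1) * ℓ ≤ ((i:ℝ) - 1) * c :=
          mul_le_mul_of_nonneg_left hcℓR (by linarith)
        have hA_le : (x₀:ℝ) + ((i:ℝ) - 1) * ℓ ≤ (c:ℝ) * i := by nlinarith [h2']
        have hle : κ * ((x₀:ℝ) + ((i:ℝ) - 1) * ℓ) ≤ (κ * c) * i := by
          nlinarith [mul_le_mul_of_nonneg_left hA_le hκ.le]
        have h0 : 0 ≤ e i ω := hneg i hi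
        rw [div_div]
        calc e i ω / (↑i * (κ * c)) = e i ω / ((κ * c) * i) := by ring_nf
          _ ≤ e i ω / (κ * ((x₀:ℝ) + ((i:ℝ) - 1) * ℓ)) :=
            div_le_div_of_nonneg_left h0 hpos hle
      have hsum : (∑ i ∈ Finset.Icc 1 n, e i ω / i) / (κ * c)
          ≤ ∑ i ∈ Finset.Icc 1 n, e i ω / (κ * ((x₀:ℝ) + ((i:ℝ) - 1) * ℓ)) := by
        rw [Finset.sum_div]
        exact Finset.sum_le_sum hterm
      have : (∑ i ∈ Finset.Icc 1 n, e i ω / i) / (κ * c) ≤ t := le_trans hsum hω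
      rw [div_le_iff₀ hκc] at this
      linarith [this]
  have hNnull : P N = 0 := by
    rw [hN]
    refine le_antisymm (le_trans (measure_biUnion_finset_le _ _) ?_) zero_le
    refine le_of_eq (Finset.sum_eq_zero fun i _ => ?_)
    have h0 : {ω : Ω | e i ω < 0} = e i ⁻¹' Set.Iio 0 := rfl
    rw [h0, ← Measure.map_apply (he_meas i) measurableSet_Iio, he_law i]
    exact stmt4_expMeasure_Iio
  have hyule := stmt4_yule P e he_meas he_indep he_law n (κ * c * t)
  have hbound : P {ω : Ω | ∑ i ∈ Finset.Icc 1 n, e i ω / (κ * (x₀ + (i - 1) * ℓ)) ≤ t}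
      ≤ ENNReal.ofReal (β ^ n) := by
    calc P {ω : Ω | ∑ i ∈ Finset.Icc 1 n, e i ω / (κ * (x₀ + (i - 1) * ℓ)) ≤ t}
        ≤ P (E' ∪ N) := measure_mono hsub
      _ ≤ P E' + P N := measure_union_le _ _
      _ = P E' := by rw [hNnull, add_zero]
      _ ≤ stmt4Bn n (κ * c * t) := hyule
      _ = ENNReal.ofReal (β ^ n) := by
          rw [stmt4Bn, if_pos (by positivity : (0:ℝ) ≤ κ * c * t)]
          congr 2
          rw [hβ]
          ring_nf
  refine le_trans hbound (ENNReal.ofReal_le_ofReal ?_)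
  -- real inequality β^n ≤ C δ^M
  rcases eq_or_lt_of_le hβ0 with hβz | hβpos
  · -- β = 0
    have hβz' : β = 0 := hβz.symm
    have hC0 : C = 0 := by
      rw [hC, hβz']
      apply Real.zero_rpow
      have hx : (0:ℝ) ≤ (x₀:ℝ) / ℓ := by positivity
      intro h
      nlinarith
    rw [hC0, zero_mul, hβz', zero_pow (by omega : n ≠ 0)]
  · -- β > 0
    have hδβ : δ = β ^ ((1:ℝ)/ℓ) := hδ
    have hCβ : C = β ^ (-1 - (x₀:ℝ)/ℓ) := hC
    have hδM : δ ^ M = β ^ (((1:ℝ)/ℓ) * M) := by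
      rw [hδβ, ← Real.rpow_natCast (β ^ ((1:ℝ)/ℓ)) M, ← Real.rpow_mul hβ0]
    have hprod : C * δ ^ M = β ^ ((-1 - (x₀:ℝ)/ℓ) + ((1:ℝ)/ℓ) * M) := by
      rw [hCβ, hδM, ← Real.rpow_add hβpos]
    have hβn : β ^ n = β ^ ((n:ℝ)) := (Real.rpow_natCast β n).symm
    rw [hprod, hβn]
    apply Real.rpow_le_rpow_of_exponent_ge hβpos hβ1.le
    -- need: -1 - x₀/ℓ + M/ℓ ≤ n
    have hnat : M - x₀ < ℓ * (n + 1) := by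
      have h1 := Nat.div_add_mod (M - x₀) ℓ
      have h2 := Nat.mod_lt (M - x₀) (show 0 < ℓ by omega)
      calc M - x₀ = ℓ * ((M - x₀)/ℓ) + (M - x₀) % ℓ := h1.symm
        _ < ℓ * ((M - x₀)/ℓ) + ℓ := Nat.add_lt_add_left h2 _
        _ = ℓ * (n + 1) := by rw [hn]; ring
    have hcast : (M:ℝ) - (x₀:ℝ) ≤ (ℓ:ℝ) * ((n:ℝ) + 1) := by
      have : (M - x₀ : ℕ) ≤ ℓ * (n + 1) := hnat.le
      have h3 : ((M - x₀ : ℕ) : ℝ) = (M:ℝ) - (x₀:ℝ) := by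
        rw [Nat.cast_sub (by omega)]
      calc (M:ℝ) - (x₀:ℝ) = ((M - x₀ : ℕ) : ℝ) := h3.symm
        _ ≤ ((ℓ * (n + 1) : ℕ) : ℝ) := by exact_mod_cast this
        _ = (ℓ:ℝ) * ((n:ℝ) + 1) := by push_cast; ring
    exact stmt4_exponent_le x₀ ℓ M n hℓpos hcast
end

section
/- Let A > 0, r ≥ 1 a real number, and p ≥ 1 an integer. Then the series ∑_{n=1}^∞ n^r · exp( −n·log( n / (A·(1 + n^{p/(p+1)})) ) + n − A·(1 + n^{p/(p+1)}) ) converges. -/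
open Real

/-- For `A > 0`, a real `r ≥ 1` and an integer `p ≥ 1`, the series
`∑_{n=1}^∞ n^r exp(-n log(n/(A(1+n^{p/(p+1)}))) + n - A(1+n^{p/(p+1)}))`
converges. -/
theorem stmt10 (A : ℝ) (hA : 0 < A) (r : ℝ) (hr : 1 ≤ r) (p : ℕ) (hp : 1 ≤ p) :
    Summable (fun n : ℕ =>
      ((n : ℝ) + 1) ^ r *
        Real.exp
          (-((n : ℝ) + 1) *
              Real.log (((n : ℝ) + 1) /
                (A * (1 + ((n : ℝ) + 1) ^ ((p : ℝ) / ((p : ℝ) + 1))))) +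
            ((n : ℝ) + 1) -
            A * (1 + ((n : ℝ) + 1) ^ ((p : ℝ) / ((p : ℝ) + 1))))) := by
  have hp1 : (1:ℝ) ≤ (p:ℝ) := by exact_mod_cast hp
  have hppos : (0:ℝ) < (p:ℝ) + 1 := by linarith
  set α : ℝ := (p:ℝ) / ((p:ℝ) + 1) with hαdef
  have hα0 : 0 ≤ α := div_nonneg (by linarith) hppos.le
  set c : ℝ := 1 / ((p:ℝ) + 1) with hcdef
  have hcpos : 0 < c := by positivity
  have hcα : α = 1 - c := by
    rw [hαdef, hcdef]; field_simp; ring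
  set K : ℝ := Real.log (2 * A) + 2 with hKdef
  -- the geometric comparison series
  have hgeom : Summable (fun n : ℕ => Real.exp (-(n : ℝ))) := by
    have heq : (fun n : ℕ => Real.exp (-(n : ℝ))) = fun n : ℕ => Real.exp (-1) ^ n := by
      funext n
      rw [← Real.exp_nat_mul]
      ring_nf
    rw [heq]
    exact summable_geometric_of_lt_one (Real.exp_pos _).le
      (Real.exp_lt_one_iff.mpr (by norm_num))
  -- the key tendsto fact
  have htend : Filter.Tendsto
      (fun x : ℝ => x * (r * (Real.log x / x) + (-(c * Real.log x) + K)))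
      Filter.atTop Filter.atBot := by
    refine Filter.Tendsto.atTop_mul_atBot₀ Filter.tendsto_id ?_
    refine Filter.Tendsto.add_atBot (C := 0) ?_ ?_
    · have h0 := Real.isLittleO_log_id_atTop.tendsto_div_nhds_zero
      have := h0.const_mul r
      simpa using this
    · refine Filter.Tendsto.atBot_add ?_ tendsto_const_nhds
      have := Filter.Tendsto.const_mul_atTop_of_neg (r := -c)
        (by linarith : -c < 0) Real.tendsto_log_atTop
      simpa [neg_mul] using this
  -- eventual bound on ℝ
  have hx : ∀ᶠ x : ℝ in Filter.atTop,
      1 ≤ x ∧ x * (r * (Real.log x / x) + (-(c * Real.log x) + K)) ≤ 0 :=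
    (Filter.eventually_ge_atTop 1).and (htend.eventually (Filter.eventually_le_atBot 0))
  have hcomp : Filter.Tendsto (fun n : ℕ => (n : ℝ) + 1) Filter.atTop Filter.atTop :=
    Filter.tendsto_atTop_add_const_right _ 1 tendsto_natCast_atTop_atTop
  have hn := hcomp.eventually hx
  -- comparison
  refine summable_of_isBigO_nat hgeom ?_
  rw [Asymptotics.isBigO_iff]
  refine ⟨1, ?_⟩
  filter_upwards [hn] with n hm
  obtain ⟨hm1, hm2⟩ := hm
  set m : ℝ := (n : ℝ) + 1 with hmdef
  have hm0 : 0 < m := by linarith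
  have hmne : m ≠ 0 := ne_of_gt hm0
  have hineq : r * Real.log m - c * (m * Real.log m) + K * m ≤ 0 := by
    have heq : m * (r * (Real.log m / m) + (-(c * Real.log m) + K))
        = r * Real.log m - c * (m * Real.log m) + K * m := by
      field_simp; ring
    linarith [heq ▸ hm2]
  have hmα1 : (1:ℝ) ≤ m ^ α := Real.one_le_rpow hm1 hα0
  have hDpos : 0 < A * (1 + m ^ α) := by positivity
  have hlogD : Real.log (A * (1 + m ^ α)) ≤ Real.log (2 * A) + α * Real.log m := by
    have h1 : A * (1 + m ^ α) ≤ (2 * A) * m ^ α := by nlinarith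
    have h2 : Real.log (A * (1 + m ^ α)) ≤ Real.log ((2 * A) * m ^ α) :=
      Real.log_le_log hDpos h1
    have h3 : Real.log ((2 * A) * m ^ α) = Real.log (2 * A) + α * Real.log m := by
      rw [Real.log_mul (by positivity) (by positivity), Real.log_rpow hm0]
    linarith
  have hlogsplit : Real.log (m / (A * (1 + m ^ α))) = Real.log m - Real.log (A * (1 + m ^ α)) :=
    Real.log_div hmne (ne_of_gt hDpos)
  -- key pointwise bound
  have hkey : m ^ r * Real.exp (-m * Real.log (m / (A * (1 + m ^ α))) + m - A * (1 + m ^ α))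
      ≤ Real.exp (-(n : ℝ)) := by
    rw [Real.rpow_def_of_pos hm0, ← Real.exp_add]
    apply Real.exp_le_exp.mpr
    have hnm : -(n : ℝ) = 1 - m := by rw [hmdef]; ring
    rw [hnm, hlogsplit]
    have hmul : m * Real.log (A * (1 + m ^ α)) ≤ m * (Real.log (2 * A) + α * Real.log m) :=
      mul_le_mul_of_nonneg_left hlogD hm0.le
    have hrew : Real.log m * r + (-m * (Real.log m - Real.log (A * (1 + m ^ α))) + m
        - A * (1 + m ^ α))
        ≤ r * Real.log m - c * (m * Real.log m) + (Real.log (2 * A) + 1) * m := by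
      have hexp : r * Real.log m - m * Real.log m + m * (Real.log (2 * A) + α * Real.log m) + m
          = r * Real.log m - c * (m * Real.log m) + (Real.log (2 * A) + 1) * m := by
        rw [hcα]; ring
      nlinarith [hDpos, hmul]
    have hKm : K * m = Real.log (2 * A) * m + 2 * m := by rw [hKdef]; ring
    have hfin : r * Real.log m - c * (m * Real.log m) + (Real.log (2 * A) + 1) * m ≤ 1 - m := by
      nlinarith [hineq]
    linarith
  have hnonneg : 0 ≤ m ^ r * Real.exp (-m * Real.log (m / (A * (1 + m ^ α))) + m
      - A * (1 + m ^ α)) := by positivity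
  rw [Real.norm_eq_abs, Real.norm_eq_abs, abs_of_nonneg hnonneg,
    abs_of_nonneg (Real.exp_pos _).le, one_mul]
  exact hkey
end
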